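/- arXiv:1904.09957 — 2 statements merged into one kernel-verified Lean document; each statement's English description precedes it below -/
import Mathlib

section
/- Let f ∈ L¹(ℝ²) and g ∈ L^{2,∞}(ℝ², ℂ). Then the convolution f ∗ g belongs to L^{2,∞}(ℝ²) and satisfies ‖f ∗ g‖_{L^{2,∞}(ℝ²)} ≤ 3√2 · ‖f‖_{L¹(ℝ²)} · ‖g‖_{L^{2,∞}(ℝ²)}. -/
open MeasureTheory Complex Metric
open scoped ENNReal NNReal

/-- The weak-`L²` (Lorentz `L^{2,∞}`) quasinorm of `g` on `ℝ² ≅ ℂ`: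
`sup_{λ>0} λ · (volume {x : |g x| > λ})^{1/2}`. -/
noncomputable def weakL2 {E : Type*} [NormedAddCommGroup E] (g : ℂ → E) : ℝ≥0∞ :=
  ⨆ (l : ℝ) (_ : 0 < l), ENNReal.ofReal l * (volume {x : ℂ | l < ‖g x‖}) ^ (1 / 2 : ℝ)

-- square root of square in ENNReal
lemma sq_half (x : ℝ≥0∞) : (x * x) ^ (1/2 : ℝ) = x := by
  rw [← pow_two, ← ENNReal.rpow_natCast x 2, ← ENNReal.rpow_mul]
  norm_num

lemma weakL2_le (g : ℂ → ℂ) {s : ℝ} (hs : 0 < s) :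
    ENNReal.ofReal s * (volume {x : ℂ | s < ‖g x‖}) ^ (1/2 : ℝ) ≤ weakL2 g := by
  exact le_iSup₂ (f := fun (l : ℝ) (_ : 0 < l) =>
    ENNReal.ofReal l * (volume {x : ℂ | l < ‖g x‖}) ^ (1 / 2 : ℝ)) s hs

-- the tail estimate
lemma tail_bound (g : ℂ → ℂ) {s : ℝ} (hs : 0 < s) :
    volume {x : ℂ | s < ‖g x‖} ≤
      weakL2 g * weakL2 g * (ENNReal.ofReal s)⁻¹ * (ENNReal.ofReal s)⁻¹ := by
  have h1 := weakL2_le g hs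
  set v := volume {x : ℂ | s < ‖g x‖}
  have hs0 : ENNReal.ofReal s ≠ 0 := by simp [hs]
  have hstop : ENNReal.ofReal s ≠ ⊤ := ENNReal.ofReal_ne_top
  have h2 : v ^ (1/2 : ℝ) ≤ weakL2 g * (ENNReal.ofReal s)⁻¹ := by
    rw [← div_eq_mul_inv, ENNReal.le_div_iff_mul_le (Or.inl hs0) (Or.inl hstop),
      mul_comm]
    exact h1
  calc v = v ^ (1/2 : ℝ) * v ^ (1/2 : ℝ) := by
            rw [← ENNReal.rpow_add_of_nonneg _ _ (by norm_num) (by norm_num)]; norm_num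
    _ ≤ (weakL2 g * (ENNReal.ofReal s)⁻¹) * (weakL2 g * (ENNReal.ofReal s)⁻¹) :=
          mul_le_mul' h2 h2
    _ = weakL2 g * weakL2 g * (ENNReal.ofReal s)⁻¹ * (ENNReal.ofReal s)⁻¹ := by ring

theorem key (f : ℂ → ℝ) (g : ℂ → ℂ)
    (hf : Integrable f) (hfm : Measurable f) (hgm : Measurable g)
    (hg : weakL2 g < ⊤) (hI : 0 < ∫ x, |f x|) :
    weakL2 (fun x => ∫ y, f (x - y) • g y) ≤
      ENNReal.ofReal (3 * Real.sqrt 2) * ENNReal.ofReal (∫ x, |f x|) * weakL2 g := by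
  set I := ∫ x, |f x| with hIdef
  set A := weakL2 g with hAdef
  have hA : A ≠ ⊤ := hg.ne
  refine iSup₂_le fun l hl => ?_
  -- setup
  set M : ℝ := l / (2 * I) with hMdef
  have hM : 0 < M := div_pos hl (by linarith)
  have hMI : M * I = l / 2 := by
    rw [hMdef, div_mul_eq_mul_div, mul_comm l I, mul_comm 2 I, mul_div_mul_left _ _ hI.ne']
  set S : Set ℂ := {x : ℂ | M < ‖g x‖} with hSdef
  have hS : MeasurableSet S := measurableSet_lt measurable_const hgm.norm
  set g₁ : ℂ → ℂ := S.indicator g with hg1def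
  set g₂ : ℂ → ℂ := Sᶜ.indicator g with hg2def
  have hg1m : Measurable g₁ := hgm.indicator hS
  have hg2m : Measurable g₂ := hgm.indicator hS.compl
  have hg12 : ∀ y, g₁ y + g₂ y = g y := fun y => by
    exact congrFun (S.indicator_self_add_compl g) y
  have hIf : ∫⁻ x, (‖f x‖₊ : ℝ≥0∞) = ENNReal.ofReal I := by
    rw [hIdef, ofReal_integral_eq_lintegral_ofReal hf.abs (Filter.Eventually.of_forall fun x => abs_nonneg _)]
    simp_rw [← enorm_eq_nnnorm, Real.enorm_eq_ofReal_abs]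
  have hIf_ne_top : ENNReal.ofReal I ≠ ⊤ := ENNReal.ofReal_ne_top
  have hrM0 : ENNReal.ofReal M ≠ 0 := by simp [hM]
  have hrMtop : ENNReal.ofReal M ≠ ⊤ := ENNReal.ofReal_ne_top
  -- bound on the L¹ norm of g₁
  set L : ℝ≥0∞ := 2 * (A * A) * (ENNReal.ofReal M)⁻¹ with hLdef
  have hLne : L ≠ ⊤ := by
    rw [hLdef]
    exact ENNReal.mul_ne_top (ENNReal.mul_ne_top (by norm_num) (ENNReal.mul_ne_top hA hA))
      (by simp [hrM0])
  have hg1L1 : ∫⁻ y, (‖g₁ y‖₊ : ℝ≥0∞) ≤ L := by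
    have hlc : ∫⁻ y, (‖g₁ y‖₊ : ℝ≥0∞) = ∫⁻ t in Set.Ioi (0:ℝ), volume {a : ℂ | t < ‖g₁ a‖} := by
      simp_rw [← enorm_eq_nnnorm, ← ofReal_norm]
      exact lintegral_eq_lintegral_meas_lt volume
        (Filter.Eventually.of_forall fun a => norm_nonneg _) hg1m.norm.aemeasurable
    rw [hlc, ← Set.Ioc_union_Ioi_eq_Ioi hM.le,
      lintegral_union measurableSet_Ioi (Set.Ioc_disjoint_Ioi le_rfl)]
    have hIoc : ∫⁻ t in Set.Ioc (0:ℝ) M, volume {a : ℂ | t < ‖g₁ a‖} ≤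
        A * A * (ENNReal.ofReal M)⁻¹ := by
      have hsub : ∀ t ∈ Set.Ioc (0:ℝ) M, volume {a : ℂ | t < ‖g₁ a‖} ≤
          A * A * (ENNReal.ofReal M)⁻¹ * (ENNReal.ofReal M)⁻¹ := by
        intro t ht
        refine le_trans (measure_mono ?_) (tail_bound g hM)
        intro a ha
        simp only [Set.mem_setOf_eq] at ha ⊢
        by_contra hc
        have : g₁ a = 0 := Set.indicator_of_notMem (by simpa [hSdef] using hc) g
        rw [this] at ha
        simp at ha
        linarith [ht.1]
      calc ∫⁻ t in Set.Ioc (0:ℝ) M, volume {a : ℂ | t < ‖g₁ a‖}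
          ≤ ∫⁻ _ in Set.Ioc (0:ℝ) M, (A * A * (ENNReal.ofReal M)⁻¹ * (ENNReal.ofReal M)⁻¹) :=
            setLIntegral_mono measurable_const hsub
        _ = A * A * (ENNReal.ofReal M)⁻¹ * (ENNReal.ofReal M)⁻¹ * ENNReal.ofReal M := by
            rw [setLIntegral_const, Real.volume_Ioc]
            norm_num
        _ = A * A * (ENNReal.ofReal M)⁻¹ := by
            rw [mul_assoc, ENNReal.inv_mul_cancel hrM0 hrMtop, mul_one]
    have hIoi : ∫⁻ t in Set.Ioi M, volume {a : ℂ | t < ‖g₁ a‖} ≤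
        A * A * (ENNReal.ofReal M)⁻¹ := by
      have hsub : ∀ t ∈ Set.Ioi M, volume {a : ℂ | t < ‖g₁ a‖} ≤
          A * A * ((ENNReal.ofReal t)⁻¹ * (ENNReal.ofReal t)⁻¹) := by
        intro t ht
        have ht0 : 0 < t := lt_trans hM ht
        calc volume {a : ℂ | t < ‖g₁ a‖} ≤ volume {a : ℂ | t < ‖g a‖} := by
              refine measure_mono fun a ha => ?_
              simp only [Set.mem_setOf_eq] at ha ⊢
              exact lt_of_lt_of_le ha (norm_indicator_le_norm_self g a)
          _ ≤ A * A * (ENNReal.ofReal t)⁻¹ * (ENNReal.ofReal t)⁻¹ := tail_bound g ht0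
          _ = A * A * ((ENNReal.ofReal t)⁻¹ * (ENNReal.ofReal t)⁻¹) := by ring
      have hint : ∫⁻ t in Set.Ioi M, ((ENNReal.ofReal t)⁻¹ * (ENNReal.ofReal t)⁻¹)
          = (ENNReal.ofReal M)⁻¹ := by
        have h1 : ∫⁻ t in Set.Ioi M, ((ENNReal.ofReal t)⁻¹ * (ENNReal.ofReal t)⁻¹)
            = ∫⁻ t in Set.Ioi M, ENNReal.ofReal (t ^ (-2:ℝ)) := by
          refine setLIntegral_congr_fun measurableSet_Ioi
            (fun t ht => ?_)
          have ht0 : 0 < t := lt_trans hM ht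
          have h2 : t ^ (-2:ℝ) = t⁻¹ * t⁻¹ := by
            rw [show (-2:ℝ) = (-1) + (-1) by norm_num, Real.rpow_add ht0, Real.rpow_neg_one]
          rw [h2, ENNReal.ofReal_mul (inv_nonneg.mpr ht0.le), ENNReal.ofReal_inv_of_pos ht0]
        have hnn : 0 ≤ᶠ[ae (volume.restrict (Set.Ioi M))] fun t : ℝ => t ^ (-2:ℝ) := by
          filter_upwards [ae_restrict_mem measurableSet_Ioi] with t ht
          exact Real.rpow_nonneg (le_of_lt (lt_trans hM ht)) _
        rw [h1, ← ofReal_integral_eq_lintegral_ofReal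
            (integrableOn_Ioi_rpow_of_lt (by norm_num) hM) hnn,
          integral_Ioi_rpow_of_lt (by norm_num) hM, ← ENNReal.ofReal_inv_of_pos hM]
        norm_num [Real.rpow_neg_one]
      calc ∫⁻ t in Set.Ioi M, volume {a : ℂ | t < ‖g₁ a‖}
          ≤ ∫⁻ t in Set.Ioi M, A * A * ((ENNReal.ofReal t)⁻¹ * (ENNReal.ofReal t)⁻¹) :=
            setLIntegral_mono (measurable_const.mul
              (ENNReal.measurable_ofReal.inv.mul ENNReal.measurable_ofReal.inv)) hsub
        _ = A * A * ∫⁻ t in Set.Ioi M, ((ENNReal.ofReal t)⁻¹ * (ENNReal.ofReal t)⁻¹) :=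
            lintegral_const_mul' _ _ (ENNReal.mul_ne_top hA hA)
        _ = A * A * (ENNReal.ofReal M)⁻¹ := by rw [hint]
    calc _ ≤ A * A * (ENNReal.ofReal M)⁻¹ + A * A * (ENNReal.ofReal M)⁻¹ := add_le_add hIoc hIoi
      _ = L := by rw [hLdef]; ring
  -- measurability on the product
  have hg1m' : Measurable fun p : ℂ × ℂ => (‖f (p.1 - p.2)‖₊ : ℝ≥0∞) * (‖g₁ p.2‖₊ : ℝ≥0∞) :=
    ((hfm.comp (measurable_fst.sub measurable_snd)).nnnorm.coe_nnreal_ennreal).mul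
      ((hg1m.comp measurable_snd).nnnorm.coe_nnreal_ennreal)
  have hdouble : ∫⁻ x, ∫⁻ y, (‖f (x - y)‖₊ : ℝ≥0∞) * (‖g₁ y‖₊ : ℝ≥0∞) =
      ENNReal.ofReal I * ∫⁻ y, (‖g₁ y‖₊ : ℝ≥0∞) := by
    rw [lintegral_lintegral_swap hg1m'.aemeasurable]
    calc ∫⁻ y, ∫⁻ x, (‖f (x - y)‖₊ : ℝ≥0∞) * (‖g₁ y‖₊ : ℝ≥0∞)
        = ∫⁻ y, (‖g₁ y‖₊ : ℝ≥0∞) * ENNReal.ofReal I := by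
          refine lintegral_congr fun y => ?_
          rw [lintegral_mul_const' _ _ ENNReal.coe_ne_top, mul_comm]
          congr 1
          rw [← hIf]
          exact (measurePreserving_sub_right volume y).lintegral_comp
            hfm.nnnorm.coe_nnreal_ennreal
      _ = (∫⁻ y, (‖g₁ y‖₊ : ℝ≥0∞)) * ENNReal.ofReal I := lintegral_mul_const' _ _ hIf_ne_top
      _ = _ := mul_comm _ _
  have hsmul : ∀ (r : ℝ) (c : ℂ), (‖r • c‖₊ : ℝ≥0∞) = (‖r‖₊ : ℝ≥0∞) * (‖c‖₊ : ℝ≥0∞) :=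
    fun r c => by rw [nnnorm_smul]; push_cast; ring
  have hmeas1 : Measurable fun p : ℂ × ℂ => f (p.1 - p.2) • g₁ p.2 :=
    (hfm.comp (measurable_fst.sub measurable_snd)).smul (hg1m.comp measurable_snd)
  have hconv1_bound : ∫⁻ x, (‖∫ y, f (x - y) • g₁ y‖₊ : ℝ≥0∞) ≤ ENNReal.ofReal I * L := by
    calc ∫⁻ x, (‖∫ y, f (x - y) • g₁ y‖₊ : ℝ≥0∞)
        ≤ ∫⁻ x, ∫⁻ y, (‖f (x - y) • g₁ y‖₊ : ℝ≥0∞) :=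
          lintegral_mono fun x => enorm_integral_le_lintegral_enorm _
      _ = ∫⁻ x, ∫⁻ y, (‖f (x - y)‖₊ : ℝ≥0∞) * (‖g₁ y‖₊ : ℝ≥0∞) := by simp_rw [hsmul]
      _ = ENNReal.ofReal I * ∫⁻ y, (‖g₁ y‖₊ : ℝ≥0∞) := hdouble
      _ ≤ ENNReal.ofReal I * L := mul_le_mul_right hg1L1 _
  have hfin : ∫⁻ x, ∫⁻ y, (‖f (x - y)‖₊ : ℝ≥0∞) * (‖g₁ y‖₊ : ℝ≥0∞) < ⊤ := by
    rw [hdouble]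
    exact ENNReal.mul_lt_top hIf_ne_top.lt_top (lt_of_le_of_lt hg1L1 hLne.lt_top)
  have hae1 : ∀ᵐ x, Integrable (fun y => f (x - y) • g₁ y) volume := by
    have hm : Measurable fun x => ∫⁻ y, (‖f (x - y)‖₊ : ℝ≥0∞) * (‖g₁ y‖₊ : ℝ≥0∞) :=
      hg1m'.lintegral_prod_right'
    filter_upwards [ae_lt_top hm hfin.ne] with x hx
    refine ⟨((hfm.comp (measurable_const.sub measurable_id)).smul hg1m).aestronglyMeasurable, ?_⟩
    rw [hasFiniteIntegral_def]
    calc ∫⁻ y, (‖f (x - y) • g₁ y‖₊ : ℝ≥0∞)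
        = ∫⁻ y, (‖f (x - y)‖₊ : ℝ≥0∞) * (‖g₁ y‖₊ : ℝ≥0∞) := by simp_rw [hsmul]
      _ < ⊤ := hx
  have hfxAll : ∀ x : ℂ, Integrable (fun y => f (x - y)) volume := by
    intro x
    refine ⟨(hfm.comp (measurable_const.sub measurable_id)).aestronglyMeasurable, ?_⟩
    rw [hasFiniteIntegral_def]
    have he : ∫⁻ y, (‖f (x - y)‖₊ : ℝ≥0∞) = ∫⁻ z, (‖f z‖₊ : ℝ≥0∞) :=
      (Measure.measurePreserving_sub_left volume x).lintegral_comp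
        hfm.nnnorm.coe_nnreal_ennreal
    show ∫⁻ y, (‖f (x - y)‖₊ : ℝ≥0∞) < ⊤
    rw [he, hIf]
    exact hIf_ne_top.lt_top
  have hg2bound : ∀ y, ‖g₂ y‖ ≤ M := by
    intro y
    by_cases hy : y ∈ Sᶜ
    · rw [hg2def, Set.indicator_of_mem hy]
      have : ¬ (M < ‖g y‖) := hy
      linarith [not_lt.mp this]
    · rw [hg2def, Set.indicator_of_notMem hy]
      simpa using hM.le
  have hptw : ∀ x y : ℂ, ‖f (x - y) • g₂ y‖ ≤ |f (x - y)| * M := by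
    intro x y
    calc ‖f (x - y) • g₂ y‖ = |f (x - y)| * ‖g₂ y‖ := by
          rw [norm_smul, Real.norm_eq_abs]
      _ ≤ |f (x - y)| * M := mul_le_mul_of_nonneg_left (hg2bound y) (abs_nonneg _)
  have hint2 : ∀ x, Integrable (fun y => f (x - y) • g₂ y) volume := by
    intro x
    refine ((hfxAll x).abs.mul_const M).mono
      ((hfm.comp (measurable_const.sub measurable_id)).smul hg2m).aestronglyMeasurable
      (Filter.Eventually.of_forall fun y => ?_)
    exact le_trans (hptw x y) (le_abs_self _)
  have hconv2 : ∀ x, ‖∫ y, f (x - y) • g₂ y‖ ≤ l / 2 := by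
    intro x
    calc ‖∫ y, f (x - y) • g₂ y‖ ≤ ∫ y, ‖f (x - y) • g₂ y‖ := norm_integral_le_integral_norm _
      _ ≤ ∫ y, |f (x - y)| * M :=
          integral_mono (hint2 x).norm ((hfxAll x).abs.mul_const M) fun y => hptw x y
      _ = (∫ y, |f (x - y)|) * M := integral_mul_const M _
      _ = I * M := by
          congr 1
          rw [hIdef]
          exact (Measure.measurePreserving_sub_left volume x).integral_comp
            (MeasurableEquiv.subLeft x).measurableEmbedding (fun z => |f z|)
      _ = l / 2 := by rw [mul_comm]; exact hMI
  have hsplit : ∀ᵐ x, (∫ y, f (x - y) • g y) =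
      (∫ y, f (x - y) • g₁ y) + ∫ y, f (x - y) • g₂ y := by
    filter_upwards [hae1] with x hx
    rw [← integral_add hx (hint2 x)]
    refine integral_congr_ae (Filter.Eventually.of_forall fun y => ?_)
    show f (x - y) • g y = f (x - y) • g₁ y + f (x - y) • g₂ y
    rw [← smul_add, hg12]
  have hconv1meas : AEMeasurable (fun x => (‖∫ y, f (x - y) • g₁ y‖₊ : ℝ≥0∞)) volume := by
    have hsm : StronglyMeasurable fun x => ∫ y, f (x - y) • g₁ y :=
      hmeas1.stronglyMeasurable.integral_prod_right'
    exact hsm.measurable.nnnorm.coe_nnreal_ennreal.aemeasurable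
  have hl2 : (0:ℝ) < l / 2 := half_pos hl
  have hcheb : volume {x : ℂ | l / 2 < ‖∫ y, f (x - y) • g₁ y‖} ≤
      ENNReal.ofReal I * L / ENNReal.ofReal (l / 2) := by
    have h1 := mul_meas_ge_le_lintegral₀ hconv1meas (ENNReal.ofReal (l/2))
    have hsub : {x : ℂ | l / 2 < ‖∫ y, f (x - y) • g₁ y‖} ⊆
        {x : ℂ | ENNReal.ofReal (l/2) ≤ (‖∫ y, f (x - y) • g₁ y‖₊ : ℝ≥0∞)} := by
      intro x hx
      simp only [Set.mem_setOf_eq] at hx ⊢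
      rw [← enorm_eq_nnnorm, ← ofReal_norm]
      exact ENNReal.ofReal_le_ofReal hx.le
    rw [ENNReal.le_div_iff_mul_le (Or.inl (ENNReal.ofReal_pos.mpr hl2).ne')
      (Or.inl ENNReal.ofReal_ne_top), mul_comm]
    exact le_trans (mul_le_mul_right (measure_mono hsub) _) (h1.trans hconv1_bound)
  have hmain : volume {x : ℂ | l < ‖∫ y, f (x - y) • g y‖} ≤
      ENNReal.ofReal I * L / ENNReal.ofReal (l / 2) := by
    refine le_trans (measure_mono_ae ?_) hcheb
    filter_upwards [hsplit] with x hx hmem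
    have hmem' : l < ‖∫ y, f (x - y) • g y‖ := hmem
    show l / 2 < ‖∫ y, f (x - y) • g₁ y‖
    by_contra hc
    push_neg at hc
    have h2 := hconv2 x
    rw [hx] at hmem'
    have h3 := norm_add_le (∫ y, f (x - y) • g₁ y) (∫ y, f (x - y) • g₂ y)
    linarith
  -- final arithmetic
  set r : ℝ≥0∞ := ENNReal.ofReal l with hrdef
  have hr0 : r ≠ 0 := (ENNReal.ofReal_pos.mpr hl).ne'
  have hrtop : r ≠ ⊤ := ENNReal.ofReal_ne_top
  have hIr0 : ENNReal.ofReal I ≠ 0 := (ENNReal.ofReal_pos.mpr hI).ne'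
  have hscalar : ENNReal.ofReal I * (2 * (ENNReal.ofReal M)⁻¹) * (ENNReal.ofReal (l/2))⁻¹
      * (r * r) = ENNReal.ofReal (8 * (I * I)) := by
    have hfin1 : ENNReal.ofReal I * (2 * (ENNReal.ofReal M)⁻¹) * (ENNReal.ofReal (l/2))⁻¹
        * (r * r) ≠ ⊤ := by
      apply ENNReal.mul_ne_top
      apply ENNReal.mul_ne_top
      apply ENNReal.mul_ne_top ENNReal.ofReal_ne_top
      · exact ENNReal.mul_ne_top (by norm_num) (ENNReal.inv_ne_top.mpr hrM0)
      · exact ENNReal.inv_ne_top.mpr (ENNReal.ofReal_pos.mpr hl2).ne'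
      · exact ENNReal.mul_ne_top hrtop hrtop
    refine (ENNReal.toReal_eq_toReal_iff' hfin1 ENNReal.ofReal_ne_top).mp ?_
    simp only [ENNReal.toReal_mul, ENNReal.toReal_inv, ENNReal.toReal_ofNat, hrdef,
      ENNReal.toReal_ofReal hI.le, ENNReal.toReal_ofReal hM.le, ENNReal.toReal_ofReal hl2.le,
      ENNReal.toReal_ofReal hl.le, ENNReal.toReal_ofReal (by nlinarith : (0:ℝ) ≤ 8 * (I * I))]
    rw [hMdef]
    field_simp
    ring
  have hkey : volume {x : ℂ | l < ‖∫ y, f (x - y) • g y‖} * (r * r) ≤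
      ENNReal.ofReal (8 * (I * I)) * (A * A) := by
    refine le_trans (mul_le_mul_left hmain _) (le_of_eq ?_)
    calc ENNReal.ofReal I * L / ENNReal.ofReal (l / 2) * (r * r)
        = (A * A) * (ENNReal.ofReal I * (2 * (ENNReal.ofReal M)⁻¹)
            * (ENNReal.ofReal (l/2))⁻¹ * (r * r)) := by
          rw [hLdef, div_eq_mul_inv]; ring
      _ = (A * A) * ENNReal.ofReal (8 * (I * I)) := by rw [hscalar]
      _ = ENNReal.ofReal (8 * (I * I)) * (A * A) := mul_comm _ _
  have h12 : (0:ℝ) ≤ 1/2 := by norm_num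
  calc ENNReal.ofReal l * volume {x : ℂ | l < ‖∫ y, f (x - y) • g y‖} ^ (1/2 : ℝ)
      = (volume {x : ℂ | l < ‖∫ y, f (x - y) • g y‖} * (r * r)) ^ (1/2 : ℝ) := by
        rw [ENNReal.mul_rpow_of_nonneg _ _ h12, sq_half r, mul_comm]
    _ ≤ (ENNReal.ofReal (8 * (I * I)) * (A * A)) ^ (1/2 : ℝ) := ENNReal.rpow_le_rpow hkey h12
    _ = ENNReal.ofReal ((8 * (I * I)) ^ (1/2 : ℝ)) * A := by
        rw [ENNReal.mul_rpow_of_nonneg _ _ h12, sq_half A,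
          ENNReal.ofReal_rpow_of_pos (by nlinarith)]
    _ ≤ ENNReal.ofReal (3 * Real.sqrt 2) * ENNReal.ofReal I * A := by
        have hs : (8 * (I * I)) ^ (1/2 : ℝ) ≤ 3 * Real.sqrt 2 * I := by
          rw [← Real.sqrt_eq_rpow]
          have h8 : (8 : ℝ) * (I * I) = (2 * Real.sqrt 2 * I)^2 := by
            have h2 : Real.sqrt 2 * Real.sqrt 2 = 2 := Real.mul_self_sqrt (by norm_num)
            nlinarith
          rw [h8, Real.sqrt_sq (by positivity)]
          nlinarith [Real.sqrt_nonneg 2]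
        calc ENNReal.ofReal ((8 * (I * I)) ^ (1/2 : ℝ)) * A
            ≤ ENNReal.ofReal (3 * Real.sqrt 2 * I) * A :=
              mul_le_mul_left (ENNReal.ofReal_le_ofReal hs) A
          _ = ENNReal.ofReal (3 * Real.sqrt 2) * ENNReal.ofReal I * A := by
              rw [ENNReal.ofReal_mul (by positivity)]


/-- if `f ∈ L¹(ℝ²)` and `g ∈ L^{2,∞}(ℝ², ℂ)`, then the convolution
`(f ∗ g)(x) = ∫ f(x−y) g(y) dy` belongs to `L^{2,∞}(ℝ²)` and
`‖f ∗ g‖_{L^{2,∞}(ℝ²)} ≤ 3√2 · ‖f‖_{L¹(ℝ²)} · ‖g‖_{L^{2,∞}(ℝ²)}`. -/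
theorem convolution_L1_weakL2_estimate
    (f : ℂ → ℝ) (g : ℂ → ℂ)
    (hf : Integrable f)
    (hg_meas : AEStronglyMeasurable g volume)
    (hg : weakL2 g < ⊤) :
    weakL2 (fun x => ∫ y, f (x - y) • g y) ≤
      ENNReal.ofReal (3 * Real.sqrt 2) * ENNReal.ofReal (∫ x, |f x|) * weakL2 g := by
  classical
  set f' : ℂ → ℝ := hf.1.mk f with hf'def
  set g' : ℂ → ℂ := hg_meas.mk g with hg'def
  have hff' : f =ᵐ[volume] f' := hf.1.ae_eq_mk
  have hgg' : g =ᵐ[volume] g' := hg_meas.ae_eq_mk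
  have hf' : Integrable f' := hf.congr hff'
  have hf'm : Measurable f' := hf.1.measurable_mk
  have hg'm : Measurable g' := hg_meas.measurable_mk
  have habs : (∫ x, |f x|) = ∫ x, |f' x| :=
    integral_congr_ae (hff'.mono fun x hx => by show |f x| = |f' x|; rw [hx])
  have hwg : weakL2 g = weakL2 g' := by
    unfold weakL2
    refine iSup_congr fun l => iSup_congr fun hl => ?_
    congr 1
    refine congrArg (· ^ (1/2:ℝ)) (measure_congr ?_)
    refine Filter.eventuallyEq_set.mpr ?_
    filter_upwards [hgg'] with x hx
    simp only [Set.mem_setOf_eq, hx]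
  have hconv : (fun x => ∫ y, f (x - y) • g y) = fun x => ∫ y, f' (x - y) • g' y := by
    funext x
    refine integral_congr_ae ?_
    have h1 : (fun y => f (x - y)) =ᵐ[volume] fun y => f' (x - y) :=
      (Measure.measurePreserving_sub_left volume x).quasiMeasurePreserving.ae_eq_comp hff'
    filter_upwards [h1, hgg'] with y h1y h2y
    show f (x - y) • g y = f' (x - y) • g' y
    rw [h2y, show f (x - y) = f' (x - y) from h1y]
  rw [hconv, habs, hwg]
  have hnn : 0 ≤ ∫ x, |f' x| := integral_nonneg fun x => abs_nonneg _
  rcases hnn.eq_or_lt with h0 | hpos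
  · -- degenerate case: f vanishes a.e.
    have hfz : f' =ᵐ[volume] 0 := by
      have h1 := (integral_eq_zero_iff_of_nonneg (fun x => abs_nonneg (f' x)) hf'.abs).mp h0.symm
      filter_upwards [h1] with x hx
      simpa [abs_eq_zero] using hx
    have hzero : ∀ x : ℂ, (∫ y, f' (x - y) • g' y) = 0 := by
      intro x
      have h1 : (fun y => f' (x - y)) =ᵐ[volume] fun _ => (0:ℝ) :=
        (Measure.measurePreserving_sub_left volume x).quasiMeasurePreserving.ae_eq_comp hfz
      refine integral_eq_zero_of_ae ?_
      filter_upwards [h1] with y hy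
      show f' (x - y) • g' y = 0
      rw [show f' (x - y) = 0 from hy, zero_smul]
    simp only [hzero]
    have hz : weakL2 (fun _ : ℂ => (0:ℂ)) = 0 := by
      refine le_antisymm (iSup₂_le fun l hl => ?_) (by simp)
      have hset : {x : ℂ | l < ‖(fun _ : ℂ => (0:ℂ)) x‖} = ∅ := by
        ext x
        simp [not_lt.mpr hl.le]
      rw [hset]
      simp [ENNReal.zero_rpow_of_pos (by norm_num : (0:ℝ) < 1/2)]
    rw [hz]
    exact (by simp)
  · exact key f' g' hf' hf'm hg'm (hwg ▸ hg) hpos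
end

section
/- Let 0 < 4r < R < ∞, let Ω = B_R(0) \ B̄_r(0) be the open annulus in ℂ, let u = (u₁,…,u_m) : Ω̄ → ℂ^m be continuous on the closed annulus and holomorphic in each component on Ω, and let δ ≥ 0 be such that sup_{|z|=r} |u(z)| ≤ δ (Euclidean norm on ℂ^m). Then for every 1 ≤ j ≤ m and every z in the closed annulus, |u_j(z)| ≤ (5/R)·(sup_{|w|=R}|u_j(w)| + δ)·|z| + 2δ. -/
open MeasureTheory Complex Metric
open scoped ENNReal NNReal

private lemma coord_norm_le' {m : ℕ} (x : EuclideanSpace ℂ (Fin m)) (j : Fin m) :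
    ‖x j‖ ≤ ‖x‖ := by
  rw [EuclideanSpace.norm_eq]
  have h1 : ‖x j‖ ^ 2 ≤ ∑ i, ‖x i‖ ^ 2 :=
    Finset.single_le_sum (fun i _ => sq_nonneg ‖x i‖) (Finset.mem_univ j)
  calc ‖x j‖ = Real.sqrt (‖x j‖ ^ 2) := (Real.sqrt_sq (norm_nonneg _)).symm
    _ ≤ _ := Real.sqrt_le_sqrt h1

/-- Maximum modulus principle on a closed annulus. -/
private lemma maxmod_annulus' {f : ℂ → ℂ} {r R C : ℝ} (hr : 0 < r) (hrR : r < R)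
    (hc : ContinuousOn f (closedBall 0 R \ ball 0 r))
    (hd : DifferentiableOn ℂ f (ball 0 R \ closedBall 0 r))
    (hbr : ∀ w ∈ sphere (0 : ℂ) r, ‖f w‖ ≤ C)
    (hbR : ∀ w ∈ sphere (0 : ℂ) R, ‖f w‖ ≤ C) :
    ∀ z ∈ closedBall (0 : ℂ) R \ ball 0 r, ‖f z‖ ≤ C := by
  intro z hz
  have hz1 : ‖z‖ ≤ R := by simpa using mem_closedBall_zero_iff.1 hz.1
  have hz2 : r ≤ ‖z‖ := le_of_not_gt fun h => hz.2 (mem_ball_zero_iff.2 h)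
  rcases eq_or_lt_of_le hz2 with h1 | h1
  · exact hbr z (mem_sphere_zero_iff_norm.2 h1.symm)
  rcases eq_or_lt_of_le hz1 with h2 | h2
  · exact hbR z (mem_sphere_zero_iff_norm.2 h2)
  set U : Set ℂ := ball 0 R \ closedBall 0 r with hUdef
  have hUopen : IsOpen U := isOpen_ball.sdiff Metric.isClosed_closedBall
  have hUb : Bornology.IsBounded U := Metric.isBounded_ball.subset Set.diff_subset
  have hsub : closure U ⊆ closedBall 0 R \ ball 0 r :=
    closure_minimal (Set.diff_subset_diff ball_subset_closedBall ball_subset_closedBall)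
      (Metric.isClosed_closedBall.sdiff isOpen_ball)
  have hdc : DiffContOnCl ℂ f U := ⟨hd, hc.mono hsub⟩
  have hfr : ∀ w ∈ frontier U, ‖f w‖ ≤ C := by
    intro w hw
    rw [hUopen.frontier_eq] at hw
    obtain ⟨hw1, hw2⟩ := hw
    have hw3 := hsub hw1
    have hwR : ‖w‖ ≤ R := by simpa using mem_closedBall_zero_iff.1 hw3.1
    have hwr : r ≤ ‖w‖ := le_of_not_gt fun h => hw3.2 (mem_ball_zero_iff.2 h)
    by_cases hcase : ‖w‖ < R
    · have hwcb : ‖w‖ ≤ r := by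
        by_contra hcon
        exact hw2 ⟨mem_ball_zero_iff.2 hcase, fun hmem =>
          hcon (mem_closedBall_zero_iff.1 hmem)⟩
      exact hbr w (mem_sphere_zero_iff_norm.2 (le_antisymm hwcb hwr))
    · exact hbR w (mem_sphere_zero_iff_norm.2 (le_antisymm hwR (le_of_not_gt hcase)))
  have hzU : z ∈ U := ⟨mem_ball_zero_iff.2 h2, fun h => absurd (mem_closedBall_zero_iff.1 h)
    (not_le.2 h1)⟩
  exact Complex.norm_le_of_forall_mem_frontier_norm_le hUb hdc hfr (subset_closure hzU)

/-- Cauchy integral formula on an annulus, split into outer and inner Cauchy-type integrals. -/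
private lemma cauchy_annulus' {f : ℂ → ℂ} {r ρ : ℝ} (hr : 0 < r)
    (hc : ContinuousOn f (closedBall 0 ρ \ ball 0 r))
    (hd : DifferentiableOn ℂ f (ball 0 ρ \ closedBall 0 r))
    {z : ℂ} (hz1 : r < ‖z‖) (hz2 : ‖z‖ < ρ) :
    (2 * Real.pi * I : ℂ)⁻¹ • (∮ w in C(0, ρ), (w - z)⁻¹ • f w)
      = f z + (2 * Real.pi * I : ℂ)⁻¹ • ∮ w in C(0, r), (w - z)⁻¹ • f w := by
  have hrρ : r ≤ ρ := le_of_lt (hz1.trans hz2)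
  have hρ0 : 0 < ρ := hr.trans_le hrρ
  have hUopen : IsOpen (ball (0:ℂ) ρ \ closedBall 0 r) := isOpen_ball.sdiff Metric.isClosed_closedBall
  have hzU : z ∈ ball (0:ℂ) ρ \ closedBall 0 r :=
    ⟨mem_ball_zero_iff.2 hz2, fun h => absurd (mem_closedBall_zero_iff.1 h) (not_le.2 hz1)⟩
  have hzd : DifferentiableAt ℂ f z := hd.differentiableAt (hUopen.mem_nhds hzU)
  have hnb : closedBall (0:ℂ) ρ \ ball 0 r ∈ nhds z :=
    Filter.mem_of_superset (hUopen.mem_nhds hzU)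
      (Set.diff_subset_diff ball_subset_closedBall ball_subset_closedBall)
  have hdsc : ContinuousOn (dslope f z) (closedBall 0 ρ \ ball 0 r) :=
    (continuousOn_dslope hnb).2 ⟨hc, hzd⟩
  have hdsd : ∀ w ∈ (ball (0:ℂ) ρ \ closedBall 0 r) \ {z},
      DifferentiableAt ℂ (dslope f z) w := by
    intro w hw
    exact (differentiableAt_dslope_of_ne (Set.notMem_singleton_iff.mp hw.2)).2
      (hd.differentiableAt (hUopen.mem_nhds hw.1))
  have key := circleIntegral_eq_of_differentiable_on_annulus_off_countable hr hrρ
    (Set.countable_singleton z) hdsc hdsd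
  have hexp : ∀ ρ' : ℝ, 0 < ρ' → (∀ w ∈ sphere (0:ℂ) ρ', w ≠ z) →
      ContinuousOn f (sphere (0:ℂ) ρ') →
      (∮ w in C(0, ρ'), dslope f z w)
        = (∮ w in C(0, ρ'), (w - z)⁻¹ • f w) - f z • (∮ w in C(0, ρ'), (w - z)⁻¹) := by
    intro ρ' hρ' hne hcf
    have hc1 : ContinuousOn (fun w => (w - z)⁻¹) (sphere (0:ℂ) ρ') :=
      (continuousOn_id.sub continuousOn_const).inv₀ fun w hw => sub_ne_zero.2 (hne w hw)
    have hi1 : CircleIntegrable (fun w => (w - z)⁻¹ • f w) 0 ρ' :=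
      (hc1.smul hcf).circleIntegrable hρ'.le
    have hi2 : CircleIntegrable (fun w => f z • (w - z)⁻¹) 0 ρ' :=
      (hc1.const_smul (f z)).circleIntegrable hρ'.le
    rw [← circleIntegral.integral_smul (𝕜 := ℂ) (E := ℂ) (f z) (fun w => (w - z)⁻¹) 0 ρ', ← circleIntegral.integral_sub hi1 hi2]
    refine circleIntegral.integral_congr hρ'.le fun w hw => ?_
    rw [dslope_of_ne f (hne w hw), slope_def_module]
    simp only [smul_eq_mul]
    ring
  have hneρ : ∀ w ∈ sphere (0:ℂ) ρ, w ≠ z := by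
    intro w hw h
    rw [mem_sphere_zero_iff_norm] at hw
    rw [h] at hw; exact absurd hw (ne_of_lt hz2)
  have hner : ∀ w ∈ sphere (0:ℂ) r, w ≠ z := by
    intro w hw h
    rw [mem_sphere_zero_iff_norm] at hw
    rw [h] at hw; exact absurd hw.symm (ne_of_lt hz1)
  have hsρ : sphere (0:ℂ) ρ ⊆ closedBall 0 ρ \ ball 0 r := by
    intro w hw
    rw [mem_sphere_zero_iff_norm] at hw
    exact ⟨mem_closedBall_zero_iff.2 hw.le, fun h =>
      absurd (mem_ball_zero_iff.1 h) (by rw [hw]; exact not_lt.2 hrρ)⟩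
  have hsr : sphere (0:ℂ) r ⊆ closedBall 0 ρ \ ball 0 r := by
    intro w hw
    rw [mem_sphere_zero_iff_norm] at hw
    exact ⟨mem_closedBall_zero_iff.2 (hw.le.trans hrρ), fun h =>
      absurd (mem_ball_zero_iff.1 h) (by rw [hw]; exact lt_irrefl r)⟩
  have houter : (∮ w in C(0, ρ), (w - z)⁻¹) = 2 * Real.pi * I :=
    circleIntegral.integral_sub_inv_of_mem_ball (mem_ball_zero_iff.2 hz2)
  have hinner : (∮ w in C(0, r), (w - z)⁻¹) = 0 := by
    refine circleIntegral_eq_zero_of_differentiable_on_off_countable hr.le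
      Set.countable_empty ?_ ?_
    · intro w hw
      have hwz : w ≠ z := fun h => absurd (mem_closedBall_zero_iff.1 (h ▸ hw)) (not_le.2 hz1)
      exact (((differentiableAt_id (𝕜 := ℂ) (x := w)).sub_const z).inv
        (sub_ne_zero.2 hwz)).continuousAt.continuousWithinAt
    · intro w hw
      have hwz : w ≠ z := fun h => absurd (mem_closedBall_zero_iff.1
        (h ▸ ball_subset_closedBall hw.1)) (not_le.2 hz1)
      exact ((differentiableAt_id (𝕜 := ℂ) (x := w)).sub_const z).inv (sub_ne_zero.2 hwz)
  rw [hexp ρ hρ0 hneρ (hc.mono hsρ), hexp r hr hner (hc.mono hsr), houter, hinner,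
    smul_zero, sub_zero] at key
  have hmain : (∮ w in C(0, ρ), (w - z)⁻¹ • f w)
      = (2 * Real.pi * I : ℂ) * f z + ∮ w in C(0, r), (w - z)⁻¹ • f w := by
    rw [smul_eq_mul] at key
    linear_combination key
  rw [hmain, smul_add]
  simp only [smul_eq_mul]
  rw [inv_mul_cancel_left₀ Complex.two_pi_I_ne_zero]

/-- Schwarz-type lemma on an annulus. Let `0 < 4r < R`, let
`u : Ω̄ → ℂ^m` be continuous on the closed annulus `B̄_R \ B_r` and holomorphic on the open
annulus `Ω = B_R \ B̄_r`, and suppose `sup_{|z|=r} |u(z)| ≤ δ`. Then for each component `j` and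
every `z` in the closed annulus,
`|u_j(z)| ≤ (5/R)(sup_{|w|=R}|u_j(w)| + δ)|z| + 2δ`. -/
theorem schwarz_lemma_annulus
    (m : ℕ) (r R : ℝ) (hr : 0 < r) (hrR : 4 * r < R)
    (u : ℂ → EuclideanSpace ℂ (Fin m))
    (hu_cont : ContinuousOn u (Metric.closedBall 0 R \ Metric.ball 0 r))
    (hu_hol : DifferentiableOn ℂ u (Metric.ball 0 R \ Metric.closedBall 0 r))
    (δ : ℝ) (hδ : 0 ≤ δ)
    (hu_inner : ∀ z ∈ Metric.sphere (0 : ℂ) r, ‖u z‖ ≤ δ) :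
    ∀ j : Fin m, ∀ z ∈ Metric.closedBall (0 : ℂ) R \ Metric.ball 0 r,
      ‖u z j‖ ≤
        (5 / R) * (sSup ((fun w => ‖u w j‖) '' Metric.sphere (0 : ℂ) R) + δ) * ‖z‖ + 2 * δ := by
  intro j z hz
  have hR : 0 < R := by linarith
  have hrR' : r < R := by linarith
  set f : ℂ → ℂ := fun w => u w j with hfdef
  have hfc : ContinuousOn f (closedBall 0 R \ ball 0 r) :=
    (EuclideanSpace.proj (𝕜 := ℂ) j).continuous.comp_continuousOn hu_cont
  have hfd : DifferentiableOn ℂ f (ball 0 R \ closedBall 0 r) :=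
    (EuclideanSpace.proj (𝕜 := ℂ) j).differentiable.comp_differentiableOn hu_hol
  set M : ℝ := sSup ((fun w => ‖u w j‖) '' Metric.sphere (0 : ℂ) R) with hMdef
  have hsphR : ((R : ℂ)) ∈ sphere (0 : ℂ) R := by
    simp [mem_sphere_zero_iff_norm, abs_of_pos hR]
  have hsphsubR : sphere (0:ℂ) R ⊆ closedBall 0 R \ ball 0 r := by
    intro w hw
    rw [mem_sphere_zero_iff_norm] at hw
    exact ⟨mem_closedBall_zero_iff.2 hw.le, fun h =>
      absurd (mem_ball_zero_iff.1 h) (by rw [hw]; exact not_lt.2 hrR'.le)⟩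
  have hbdd : BddAbove ((fun w => ‖u w j‖) '' Metric.sphere (0 : ℂ) R) :=
    ((isCompact_sphere (0:ℂ) R).image_of_continuousOn
      ((hfc.mono hsphsubR).norm)).bddAbove
  have hMb : ∀ w ∈ sphere (0:ℂ) R, ‖f w‖ ≤ M := fun w hw => le_csSup hbdd ⟨w, hw, rfl⟩
  have hM0 : 0 ≤ M := le_trans (norm_nonneg _) (hMb _ hsphR)
  have hfin : ∀ w ∈ sphere (0:ℂ) r, ‖f w‖ ≤ δ := fun w hw =>
    (coord_norm_le' (u w) j).trans (hu_inner w hw)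
  have hzR : ‖z‖ ≤ R := mem_closedBall_zero_iff.1 hz.1
  have hzr : r ≤ ‖z‖ := le_of_not_gt fun h => hz.2 (mem_ball_zero_iff.2 h)
  by_cases hMδ : M < δ
  · -- trivial case: everything bounded by δ
    have hbound := maxmod_annulus' hr hrR' hfc hfd hfin
      (fun w hw => (hMb w hw).trans hMδ.le) z hz
    have hpos : 0 ≤ (5 / R) * (M + δ) * ‖z‖ := by positivity
    linarith
  push_neg at hMδ
  -- now δ ≤ M
  set s : ℝ := 9 * R / 10 with hsdef
  set ρ2 : ℝ := 19 * R / 20 with hρ2def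
  have hs0 : 0 < s := by rw [hsdef]; linarith
  have hsr : r < s := by rw [hsdef]; linarith
  have h2rs : 2 * r ≤ s := by rw [hsdef]; linarith
  have hsρ : s < ρ2 := by rw [hsdef, hρ2def]; linarith
  have hρR : ρ2 < R := by rw [hρ2def]; linarith
  have hρ0 : 0 < ρ2 := hs0.trans hsρ
  have hrρ : r < ρ2 := hsr.trans hsρ
  have hannsub : closedBall (0:ℂ) ρ2 \ ball 0 r ⊆ closedBall 0 R \ ball 0 r :=
    Set.diff_subset_diff (closedBall_subset_closedBall hρR.le) subset_rfl
  have hannsub' : ball (0:ℂ) ρ2 \ closedBall 0 r ⊆ ball 0 R \ closedBall 0 r :=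
    Set.diff_subset_diff (ball_subset_ball hρR.le) subset_rfl
  have hfcρ : ContinuousOn f (closedBall 0 ρ2 \ ball 0 r) := hfc.mono hannsub
  have hfdρ : DifferentiableOn ℂ f (ball 0 ρ2 \ closedBall 0 r) := hfd.mono hannsub'
  -- global bound M + δ
  have maxA : ∀ w ∈ closedBall (0:ℂ) R \ ball 0 r, ‖f w‖ ≤ M + δ :=
    maxmod_annulus' hr hrR' hfc hfd
      (fun w hw => (hfin w hw).trans (by linarith))
      (fun w hw => (hMb w hw).trans (by linarith))
  -- the inner Cauchy piece G
  set G : ℂ → ℂ := fun ζ => (2 * Real.pi * I : ℂ)⁻¹ • ∮ w in C(0, r), (w - ζ)⁻¹ • f w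
    with hGdef
  have hG : ∀ ζ : ℂ, 2 * r ≤ ‖ζ‖ → ‖G ζ‖ ≤ δ := by
    intro ζ hζ
    have hbd : ∀ w ∈ sphere (0:ℂ) r, ‖(w - ζ)⁻¹ • f w‖ ≤ δ / r := by
      intro w hw
      have hwn : ‖w‖ = r := mem_sphere_zero_iff_norm.1 hw
      have h1 : r ≤ ‖w - ζ‖ := by
        calc r = 2 * r - r := by ring
          _ ≤ ‖ζ‖ - ‖w‖ := by rw [hwn]; linarith
          _ ≤ ‖ζ - w‖ := norm_sub_norm_le ζ w
          _ = ‖w - ζ‖ := norm_sub_rev ζ w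
      have h2 : ‖f w‖ ≤ δ := hfin w hw
      rw [norm_smul, norm_inv, inv_mul_eq_div]
      exact div_le_div₀ hδ h2 hr h1
    have := circleIntegral.norm_two_pi_i_inv_smul_integral_le_of_norm_le_const hr.le hbd
    calc ‖G ζ‖ ≤ r * (δ / r) := this
      _ = δ := by field_simp
  -- F, the outer Cauchy piece
  set F : ℂ → ℂ := fun ζ => (2 * Real.pi * I : ℂ)⁻¹ • ∮ w in C(0, ρ2), (w - ζ)⁻¹ • f w
    with hFdef
  have hcoe : ((ρ2.toNNReal : ℝ≥0) : ℝ) = ρ2 := Real.coe_toNNReal _ hρ0.le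
  have hsphsubρ : sphere (0:ℂ) ρ2 ⊆ closedBall 0 R \ ball 0 r := by
    intro w hw
    rw [mem_sphere_zero_iff_norm] at hw
    exact ⟨mem_closedBall_zero_iff.2 (hw.le.trans hρR.le), fun h =>
      absurd (mem_ball_zero_iff.1 h) (by rw [hw]; exact not_lt.2 hrρ.le)⟩
  have hci : CircleIntegrable f 0 ((ρ2.toNNReal : ℝ≥0) : ℝ) := by
    rw [hcoe]
    exact (hfc.mono hsphsubρ).circleIntegrable hρ0.le
  have hFps := hasFPowerSeriesOn_cauchy_integral hci (by simpa using hρ0)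
  rw [hcoe] at hFps
  have hFd : DifferentiableOn ℂ F (ball 0 ρ2) := by
    have h := hFps.differentiableOn
    rwa [Metric.emetric_ball_nnreal, hcoe] at h
  -- F(0) is small
  have hF0 : ‖F 0‖ ≤ δ := by
    have hswitch : (∮ w in C(0, ρ2), (w - (0:ℂ))⁻¹ • f w)
        = ∮ w in C(0, r), (w - (0:ℂ))⁻¹ • f w := by
      refine circleIntegral_eq_of_differentiable_on_annulus_off_countable hr hrρ.le
        Set.countable_empty ?_ ?_
      · refine ((continuousOn_id.sub continuousOn_const).inv₀ ?_).smul hfcρ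
        intro w hw
        have hwr : r ≤ ‖w‖ := le_of_not_gt fun h => hw.2 (mem_ball_zero_iff.2 h)
        show w - 0 ≠ 0
        rw [sub_zero]
        intro h
        rw [h, norm_zero] at hwr
        linarith
      · intro w hw
        have hwr : r < ‖w‖ := lt_of_not_ge fun h => hw.1.2 (mem_closedBall_zero_iff.2 h)
        have hw0 : w - 0 ≠ 0 := by
          intro h
          rw [sub_zero] at h
          rw [h, norm_zero] at hwr
          linarith
        exact (((differentiableAt_id (𝕜 := ℂ) (x := w)).sub_const 0).inv hw0).smul
          (hfdρ.differentiableAt ((isOpen_ball.sdiff Metric.isClosed_closedBall).mem_nhds hw.1))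
    have hbd : ∀ w ∈ sphere (0:ℂ) r, ‖(w - (0:ℂ))⁻¹ • f w‖ ≤ δ / r := by
      intro w hw
      have hwn : ‖w‖ = r := mem_sphere_zero_iff_norm.1 hw
      rw [norm_smul, norm_inv, sub_zero, hwn, inv_mul_eq_div]
      exact div_le_div₀ hδ (hfin w hw) hr le_rfl
    have hFF : F 0 = (2 * Real.pi * I : ℂ)⁻¹ • ∮ w in C(0, r), (w - (0:ℂ))⁻¹ • f w := by
      rw [hFdef]; simp only; rw [hswitch]
    rw [hFF]
    calc ‖(2 * Real.pi * I : ℂ)⁻¹ • ∮ w in C(0, r), (w - (0:ℂ))⁻¹ • f w‖ ≤ r * (δ / r) :=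
          circleIntegral.norm_two_pi_i_inv_smul_integral_le_of_norm_le_const hr.le hbd
      _ = δ := by field_simp
  -- H = difference quotient of F at 0
  set H : ℂ → ℂ := dslope F 0 with hHdef
  have hHd : DifferentiableOn ℂ H (ball 0 ρ2) := by
    intro w hw
    rcases eq_or_ne w 0 with rfl | hw0
    · exact ((hFps.hasFPowerSeriesAt.has_fpower_series_dslope_fslope).analyticAt.differentiableAt).differentiableWithinAt
    · exact (differentiableWithinAt_dslope_of_ne hw0).2 (hFd w hw)
  -- Cauchy formula: F = f + G on the annulus up to ρ2
  have hCF : ∀ w : ℂ, r < ‖w‖ → ‖w‖ < ρ2 → F w = f w + G w := fun w h1 h2 =>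
    cauchy_annulus' hr hfcρ hfdρ h1 h2
  -- bound for H on the ball of radius s
  have hHb : ∀ w ∈ closedBall (0:ℂ) s, ‖H w‖ ≤ (M + 3 * δ) / s := by
    have hHdc : DiffContOnCl ℂ H (ball 0 s) :=
      ⟨hHd.mono (ball_subset_ball hsρ.le),
        (hHd.continuousOn).mono (by
          rw [closure_ball _ (ne_of_gt hs0)]
          exact closedBall_subset_ball hsρ)⟩
    have hfr : ∀ w ∈ frontier (ball (0:ℂ) s), ‖H w‖ ≤ (M + 3 * δ) / s := by
      intro w hw
      rw [frontier_ball _ (ne_of_gt hs0)] at hw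
      have hws : ‖w‖ = s := mem_sphere_zero_iff_norm.1 hw
      have hw0 : w ≠ 0 := by intro h; rw [h] at hws; simp at hws; linarith
      have hFw : F w = f w + G w := hCF w (by rw [hws]; exact hsr) (by rw [hws]; exact hsρ)
      have hfw : ‖f w‖ ≤ M + δ := by
        refine maxA w ⟨mem_closedBall_zero_iff.2 (by rw [hws]; linarith), fun h => ?_⟩
        exact absurd (mem_ball_zero_iff.1 h) (by rw [hws]; exact not_lt.2 (by linarith))
      have hGw : ‖G w‖ ≤ δ := hG w (by rw [hws]; exact h2rs)
      have hFwb : ‖F w - F 0‖ ≤ M + 3 * δ := by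
        calc ‖F w - F 0‖ ≤ ‖F w‖ + ‖F 0‖ := norm_sub_le _ _
          _ ≤ (‖f w‖ + ‖G w‖) + ‖F 0‖ := by
              refine add_le_add_left ?_ _
              rw [hFw]; exact norm_add_le _ _
          _ ≤ ((M + δ) + δ) + δ := add_le_add (add_le_add hfw hGw) hF0
          _ = M + 3 * δ := by ring
      rw [hHdef, dslope_of_ne F hw0, slope_def_module, norm_smul, norm_inv, sub_zero, hws,
        inv_mul_eq_div]
      exact (div_le_div_iff_of_pos_right hs0).2 hFwb
    intro w hw
    refine Complex.norm_le_of_forall_mem_frontier_norm_le Metric.isBounded_ball hHdc hfr ?_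
    rwa [closure_ball _ (ne_of_gt hs0)]
  -- main estimate for 2r ≤ |w| ≤ s
  have hreg2 : ∀ w : ℂ, 2 * r ≤ ‖w‖ → ‖w‖ ≤ s →
      ‖f w‖ ≤ (M + 3 * δ) / s * ‖w‖ + 2 * δ := by
    intro w h2r hws
    have hwρ : ‖w‖ < ρ2 := lt_of_le_of_lt hws hsρ
    have hwr : r < ‖w‖ := lt_of_lt_of_le (by linarith) h2r
    have hFw : F w = f w + G w := hCF w hwr hwρ
    have h1 : F w - F 0 = w • H w := by
      rw [hHdef]
      have := sub_smul_dslope F 0 w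
      rw [sub_zero] at this
      rw [this]
    have h2 : ‖F w - F 0‖ ≤ ‖w‖ * ((M + 3 * δ) / s) := by
      rw [h1, norm_smul]
      exact mul_le_mul_of_nonneg_left (hHb w (mem_closedBall_zero_iff.2 hws)) (norm_nonneg w)
    have h3 : f w = (F w - F 0) + F 0 - G w := by rw [hFw]; ring
    calc ‖f w‖ = ‖(F w - F 0) + F 0 - G w‖ := by rw [← h3]
      _ ≤ ‖(F w - F 0) + F 0‖ + ‖G w‖ := norm_sub_le _ _
      _ ≤ (‖F w - F 0‖ + ‖F 0‖) + ‖G w‖ := add_le_add_left (norm_add_le _ _) _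
      _ ≤ (‖w‖ * ((M + 3 * δ) / s) + δ) + δ := add_le_add (add_le_add h2 hF0) (hG w h2r)
      _ = (M + 3 * δ) / s * ‖w‖ + 2 * δ := by ring
  -- coefficient inequality
  have hcoef2 : 2 * ((M + 3 * δ) / s) ≤ 5 / R * (M + δ) := by
    rw [← mul_div_assoc, div_mul_eq_mul_div, div_le_div_iff₀ hs0 hR, hsdef]
    nlinarith [mul_nonneg (sub_nonneg.2 hMδ) hR.le]
  have hcoef1 : (M + 3 * δ) / s ≤ 5 / R * (M + δ) := by
    have hpos : 0 ≤ (M + 3 * δ) / s := by positivity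
    linarith
  by_cases hbig : R / 5 ≤ ‖z‖
  · have h1 := maxA z hz
    have he : 5 / R * (M + δ) * (R / 5) = M + δ := by field_simp
    have h2 : 5 / R * (M + δ) * (R / 5) ≤ 5 / R * (M + δ) * ‖z‖ := by
      have : (0:ℝ) ≤ 5 / R * (M + δ) := by positivity
      exact mul_le_mul_of_nonneg_left hbig this
    rw [he] at h2
    linarith
  · push_neg at hbig
    by_cases h2r : 2 * r ≤ ‖z‖
    · have hb := hreg2 z h2r (by rw [hsdef]; linarith)
      have hcoef : (M + 3 * δ) / s * ‖z‖ ≤ 5 / R * (M + δ) * ‖z‖ :=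
        mul_le_mul_of_nonneg_right hcoef1 (norm_nonneg z)
      linarith
    · push_neg at h2r
      have hC2 : ∀ w ∈ sphere (0:ℂ) (2 * r), ‖f w‖ ≤ (M + 3 * δ) / s * (2 * r) + 2 * δ := by
        intro w hw
        have hwn : ‖w‖ = 2 * r := mem_sphere_zero_iff_norm.1 hw
        have := hreg2 w (le_of_eq hwn.symm) (by rw [hwn]; exact h2rs)
        rwa [hwn] at this
      have hCr : ∀ w ∈ sphere (0:ℂ) r, ‖f w‖ ≤ (M + 3 * δ) / s * (2 * r) + 2 * δ := by
        intro w hw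
        have h1 := hfin w hw
        have h2 : 0 ≤ (M + 3 * δ) / s * (2 * r) := by positivity
        linarith
      have hsub2 : closedBall (0:ℂ) (2*r) \ ball 0 r ⊆ closedBall 0 R \ ball 0 r :=
        Set.diff_subset_diff (closedBall_subset_closedBall (by linarith)) subset_rfl
      have hsub2' : ball (0:ℂ) (2*r) \ closedBall 0 r ⊆ ball 0 R \ closedBall 0 r :=
        Set.diff_subset_diff (ball_subset_ball (by linarith)) subset_rfl
      have hres := maxmod_annulus' hr (by linarith : r < 2 * r) (hfc.mono hsub2)
        (hfd.mono hsub2') hCr hC2 z ⟨mem_closedBall_zero_iff.2 h2r.le, hz.2⟩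
      have hkey : (M + 3 * δ) / s * (2 * r) ≤ 5 / R * (M + δ) * ‖z‖ := by
        have h1 : (M + 3 * δ) / s * (2 * r) = 2 * ((M + 3 * δ) / s) * r := by ring
        have h2 : 2 * ((M + 3 * δ) / s) * r ≤ 5 / R * (M + δ) * r :=
          mul_le_mul_of_nonneg_right hcoef2 hr.le
        have h3 : 5 / R * (M + δ) * r ≤ 5 / R * (M + δ) * ‖z‖ := by
          have : (0:ℝ) ≤ 5 / R * (M + δ) := by positivity
          exact mul_le_mul_of_nonneg_left hzr this
        linarith
      linarith
end
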